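/- Linear minimization computes a core: given a finite set E = {x₁,…,xₙ} (in some fixed order) satisfying a monotonic criterion check, define a sequence of sets by S₀ = E and, for i from 1 to n, Sᵢ = Sᵢ₋₁ \ {xᵢ} if check(Sᵢ₋₁ \ {xᵢ}) holds, and Sᵢ = Sᵢ₋₁ otherwise. Then Sₙ is a core of E. -/

import Mathlib

/-!
The sets `S i` shrink along the run and each of them satisfies `check`, since a removal only
happens when the smaller set still passes. If some `x = l[j]` survives to the final set `S n`,
then `x` was kept at step `j`, i.e. `(S j).erase x` fails `check`; as
`(S n).erase x ⊆ (S j).erase x`, monotonicity makes `(S n).erase x` fail as well.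
-/

def IsCore {α : Type*} [DecidableEq α] (check : Finset α → Prop) (E C : Finset α) : Prop :=
  C ⊆ E ∧ check C ∧ ∀ x ∈ C, ¬ check (C.erase x)

/-- `S i` is the current set after the first `i` elements of `l` have been processed. -/
def IsLinearMinRun {α : Type*} [DecidableEq α] (check : Finset α → Prop) (l : List α)
    (S : ℕ → Finset α) : Prop :=
  ∀ i (h : i < l.length),
    (check ((S i).erase l[i]) → S (i + 1) = (S i).erase l[i]) ∧
    (¬ check ((S i).erase l[i]) → S (i + 1) = S i)

namespace IsLinearMinRun

variable {α : Type*} [DecidableEq α] {check : Finset α → Prop} {l : List α} {S : ℕ → Finset α}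

theorem succ_subset (hS : IsLinearMinRun check l S) {i : ℕ} (hi : i < l.length) :
    S (i + 1) ⊆ S i := by
  by_cases hc : check ((S i).erase l[i])
  · exact (hS i hi).1 hc ▸ Finset.erase_subset _ _
  · exact (hS i hi).2 hc ▸ subset_rfl

theorem antitoneOn (hS : IsLinearMinRun check l S) : AntitoneOn S (Set.Iic l.length) :=
  antitoneOn_of_add_one_le Set.ordConnected_Iic fun _ _ _ hi ↦ hS.succ_subset hi

theorem check_of_le (hS : IsLinearMinRun check l S) (h0 : check (S 0)) :
    ∀ i ≤ l.length, check (S i)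
  | 0, _ => h0
  | i + 1, hi => by
    by_cases hc : check ((S i).erase l[i])
    · exact (hS i hi).1 hc ▸ hc
    · exact (hS i hi).2 hc ▸ hS.check_of_le h0 i (by omega)

theorem not_check_erase_of_mem (hS : IsLinearMinRun check l S) {i : ℕ} (hi : i < l.length)
    (hmem : l[i] ∈ S (i + 1)) : ¬ check ((S i).erase l[i]) := fun hc ↦ by
  rw [(hS i hi).1 hc] at hmem
  exact Finset.notMem_erase _ _ hmem

theorem isCore (hS : IsLinearMinRun check l S)
    (mono : ∀ A B : Finset α, A ⊆ B → B ⊆ S 0 → check A → check B)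
    (h0 : check (S 0)) (hl : ∀ x ∈ S 0, x ∈ l) :
    IsCore check (S 0) (S l.length) := by
  have hsub {i j : ℕ} (hij : i ≤ j) (hj : j ≤ l.length) : S j ⊆ S i :=
    hS.antitoneOn (Set.mem_Iic.2 (hij.trans hj)) (Set.mem_Iic.2 hj) hij
  refine ⟨hsub (Nat.zero_le _) le_rfl, hS.check_of_le h0 _ le_rfl, fun x hx hcx ↦ ?_⟩
  obtain ⟨j, hj, rfl⟩ := List.getElem_of_mem (hl x (hsub (Nat.zero_le _) le_rfl hx))
  have hkept := hS.not_check_erase_of_mem hj (hsub (by omega) le_rfl hx)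
  exact hkept <| mono _ _ (Finset.erase_subset_erase _ (hsub (by omega) le_rfl))
    ((Finset.erase_subset _ _).trans (hsub (Nat.zero_le _) hj.le)) hcx

end IsLinearMinRun

theorem linear_min_core_general {α : Type*} [DecidableEq α]
    (check : Finset α → Prop) (E : Finset α)
    (mono : ∀ A B : Finset α, A ⊆ B → B ⊆ E → check A → check B)
    (hE : check E)
    (l : List α) (hlE : l.toFinset = E)
    (S : ℕ → Finset α) (hS0 : S 0 = E)
    (hstep : ∀ i (h : i < l.length),
      (check ((S i).erase (l.get ⟨i, h⟩)) →
        S (i + 1) = (S i).erase (l.get ⟨i, h⟩)) ∧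
      (¬ check ((S i).erase (l.get ⟨i, h⟩)) → S (i + 1) = S i)) :
    S l.length ⊆ E ∧ check (S l.length) ∧
    ∀ x ∈ S l.length, ¬ check ((S l.length).erase x) := by
  have hrun : IsLinearMinRun check l S := hstep
  subst hS0
  exact hrun.isCore mono hE fun x hx ↦ List.mem_toFinset.1 (hlE ▸ hx)

/-- correctness of linear minimization (`LinearMin`): going over
the elements of `E` in a fixed order, removing each element whenever the
criterion still holds without it, ends with a core of `E`. -/
theorem linear_min_core {α : Type*} [DecidableEq α]
    (check : Finset α → Prop) (E : Finset α)
    (mono : ∀ A B : Finset α, A ⊆ B → B ⊆ E → check A → check B)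
    (hE : check E)
    (l : List α) (hnodup : l.Nodup) (hlE : l.toFinset = E)
    (S : ℕ → Finset α) (hS0 : S 0 = E)
    (hstep : ∀ i (h : i < l.length),
      (check ((S i).erase (l.get ⟨i, h⟩)) →
        S (i + 1) = (S i).erase (l.get ⟨i, h⟩)) ∧
      (¬ check ((S i).erase (l.get ⟨i, h⟩)) → S (i + 1) = S i)) :
    S l.length ⊆ E ∧ check (S l.length) ∧
    ∀ x ∈ S l.length, ¬ check ((S l.length).erase x) :=
  linear_min_core_general check E mono hE l hlE S hS0 hstep
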